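/- arXiv:2104.02688 — 3 statements merged into one kernel-verified Lean document; each statement's English description precedes it below -/
import Mathlib

section
/- In the one-period market with d = 1, prices y ∈ L^0(ℝ, H) and Y ∈ L^0(ℝ, F), suppose AIP holds. Let g : ℝ → ℝ be a nonnegative convex function with dom g = ℝ and lim_{x→∞} g(x)/x = M ∈ [0, ∞). Then almost surely p(g) = g(essinf_H Y) + θ* ( y − essinf_H Y ), where θ* = ( g(esssup_H Y) − g(essinf_H Y) ) / ( esssup_H Y − essinf_H Y ), with the conventions θ* = 0 when esssup_H Y = essinf_H Y and θ* = M when essinf_H Y < esssup_H Y = +∞. Moreover p(g) ∈ P(g), i.e., the infimum super-hedging cost is itself a super-hedging price, attained by the strategy θ*. -/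
open MeasureTheory Set Filter
open scoped Classical

noncomputable section

/-- Scalar product on `ℝ^d`. -/
def dotp {d : ℕ} (a b : Fin d → ℝ) : ℝ := ∑ i, a i * b i

/-- `κ` is a regular version of the conditional law of `X` knowing the σ-algebra `H`. -/
structure CondLaw {Ω : Type*} (H : MeasurableSpace Ω) {mΩ : MeasurableSpace Ω}
    (μ : Measure Ω) {E : Type*} [MeasurableSpace E] (X : Ω → E) (κ : Ω → Measure E) :
    Prop where
  isProb : ∀ ω, IsProbabilityMeasure (κ ω)
  meas : ∀ A : Set E, MeasurableSet A → Measurable[H] fun ω => κ ω A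
  law : ∀ A : Set E, MeasurableSet A → ∀ B : Set Ω, MeasurableSet[H] B →
    ∫⁻ ω in B, κ ω A ∂μ = μ (B ∩ X ⁻¹' A)

/-- The support of the measure `κ ω`: the intersection of all closed sets of full
measure (for a regular conditional law this is the conditional support). -/
def condSupp {Ω E : Type*} [TopologicalSpace E] [MeasurableSpace E]
    (κ : Ω → Measure E) (ω : Ω) : Set E :=
  ⋂₀ {A : Set E | IsClosed A ∧ κ ω A = 1}

/-- `γ` is (a version of) the conditional essential supremum of `X` knowing `H`. -/
def IsCondEssSup {Ω : Type*} (H : MeasurableSpace Ω) {mΩ : MeasurableSpace Ω}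
    (μ : Measure Ω) (X : Ω → ℝ) (γ : Ω → EReal) : Prop :=
  Measurable[H] γ ∧ (∀ᵐ ω ∂μ, (X ω : EReal) ≤ γ ω) ∧
    ∀ ζ : Ω → EReal, Measurable[H] ζ → (∀ᵐ ω ∂μ, (X ω : EReal) ≤ ζ ω) →
      ∀ᵐ ω ∂μ, γ ω ≤ ζ ω

/-- `γ` is (a version of) the conditional essential infimum of `X` knowing `H`. -/
def IsCondEssInf {Ω : Type*} (H : MeasurableSpace Ω) {mΩ : MeasurableSpace Ω}
    (μ : Measure Ω) (X : Ω → ℝ) (γ : Ω → EReal) : Prop :=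
  Measurable[H] γ ∧ (∀ᵐ ω ∂μ, γ ω ≤ (X ω : EReal)) ∧
    ∀ ζ : Ω → EReal, Measurable[H] ζ → (∀ᵐ ω ∂μ, ζ ω ≤ (X ω : EReal)) →
      ∀ᵐ ω ∂μ, ζ ω ≤ γ ω

/-- `p` is (a version of) the essential infimum of the family `S` of random variables. -/
def IsEssInfSet {Ω : Type*} {mΩ : MeasurableSpace Ω} (μ : Measure Ω)
    (S : Set (Ω → ℝ)) (p : Ω → EReal) : Prop :=
  Measurable[mΩ] p ∧ (∀ f ∈ S, ∀ᵐ ω ∂μ, p ω ≤ (f ω : EReal)) ∧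
    ∀ ζ : Ω → EReal, Measurable[mΩ] ζ → (∀ f ∈ S, ∀ᵐ ω ∂μ, ζ ω ≤ (f ω : EReal)) →
      ∀ᵐ ω ∂μ, ζ ω ≤ p ω

/-- The set of super-hedging prices of the claim `Z` in the one-period market `(y, Y)`. -/
def Prices {Ω : Type*} (H : MeasurableSpace Ω) {mΩ : MeasurableSpace Ω} (μ : Measure Ω)
    {d : ℕ} (y Y : Ω → Fin d → ℝ) (Z : Ω → ℝ) : Set (Ω → ℝ) :=
  {x | Measurable[H] x ∧ ∃ θ : Ω → Fin d → ℝ, Measurable[H] θ ∧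
    ∀ᵐ ω ∂μ, Z ω ≤ x ω + dotp (θ ω) fun i => Y ω i - y ω i}

/-- One-dimensional version of `Prices`. -/
def Prices1 {Ω : Type*} (H : MeasurableSpace Ω) {mΩ : MeasurableSpace Ω} (μ : Measure Ω)
    (y Y : Ω → ℝ) (Z : Ω → ℝ) : Set (Ω → ℝ) :=
  {x | Measurable[H] x ∧ ∃ θ : Ω → ℝ, Measurable[H] θ ∧
    ∀ᵐ ω ∂μ, Z ω ≤ x ω + θ ω * (Y ω - y ω)}

/-- One-period super-hedging prices of the zero claim in the market extended by the
additional asset `(pZ, Z)`. -/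
def PricesExt {Ω : Type*} (H : MeasurableSpace Ω) {mΩ : MeasurableSpace Ω} (μ : Measure Ω)
    {d : ℕ} (y Y : Ω → Fin d → ℝ) (Z pZ : Ω → ℝ) : Set (Ω → ℝ) :=
  {x | Measurable[H] x ∧ ∃ α : Ω → ℝ, Measurable[H] α ∧ ∃ θ : Ω → Fin d → ℝ,
    Measurable[H] θ ∧
    ∀ᵐ ω ∂μ, 0 ≤ x ω + α ω * (Z ω - pZ ω) + dotp (θ ω) fun i => Y ω i - y ω i}

/-- The function `f = -g + δ_{D}` of the paper, valued in `EReal`. -/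
def fObj {Ω : Type*} {d : ℕ} (g : Ω → (Fin d → ℝ) → ℝ) (D : Ω → Set (Fin d → ℝ))
    (ω : Ω) (z : Fin d → ℝ) : EReal :=
  if z ∈ D ω then ((-(g ω z) : ℝ) : EReal) else ⊤

/-- Fenchel–Legendre conjugate of an `EReal`-valued function on `ℝ^d`. -/
def eConj {d : ℕ} (f : (Fin d → ℝ) → EReal) (x : Fin d → ℝ) : EReal :=
  ⨆ z : Fin d → ℝ, ((dotp x z : ℝ) : EReal) - f z

/-- Convex-analytic indicator function `δ_s`. -/
def indicatorE {E : Type*} (s : Set E) (x : E) : EReal := if x ∈ s then 0 else ⊤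

/-- Relative concave envelope of `g` with respect to `D`. -/
def concEnv {d : ℕ} (g : (Fin d → ℝ) → ℝ) (D : Set (Fin d → ℝ)) (x : Fin d → ℝ) : EReal :=
  ⨅ v ∈ {v : (Fin d → ℝ) → ℝ | ConcaveOn ℝ univ v ∧ ∀ z ∈ D, g z ≤ v z}, ((v x : ℝ) : EReal)

/-- Upper semicontinuous closure of an `EReal`-valued function. -/
def usClosure {E : Type*} [TopologicalSpace E] (F : E → EReal) (x : E) : EReal :=
  Filter.limsup F (nhds x)

/-- The slope `θ^*` of Corollary 2.19, with the conventions of the paper. -/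
def thetaStar (g : ℝ → ℝ) (M I : ℝ) (S : EReal) : ℝ :=
  if S = (I : EReal) then 0 else if S = ⊤ then M
  else (g S.toReal - g I) / (S.toReal - I)

/-- Multi-period super-hedging prices at time `t` of the claim `g` paid at time `T`. -/
def PricesMulti {Ω : Type*} {mΩ : MeasurableSpace Ω} (𝓕 : ℕ → MeasurableSpace Ω)
    (μ : Measure Ω) {d : ℕ} (S : ℕ → Ω → Fin d → ℝ) (t T : ℕ) (g : Ω → ℝ) :
    Set (Ω → ℝ) :=
  {x | Measurable[𝓕 t] x ∧ ∃ θ : ℕ → Ω → Fin d → ℝ, (∀ u, Measurable[𝓕 u] (θ u)) ∧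
    ∃ ε : Ω → ℝ, Measurable[𝓕 T] ε ∧ (∀ᵐ ω ∂μ, 0 ≤ ε ω) ∧
    ∀ᵐ ω ∂μ, x ω + (∑ u ∈ Finset.Icc (t+1) T,
      dotp (θ (u-1) ω) fun i => S u ω i - S (u-1) ω i) - ε ω = g ω}

/-- One-step super-hedging prices at time `t` of the (extended-real) claim `G`
paid at time `t+1`. -/
def OneStepPrices {Ω : Type*} {mΩ : MeasurableSpace Ω} (𝓕 : ℕ → MeasurableSpace Ω)
    (μ : Measure Ω) {d : ℕ} (S : ℕ → Ω → Fin d → ℝ) (t : ℕ) (G : Ω → EReal) :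
    Set (Ω → ℝ) :=
  {x | Measurable[𝓕 t] x ∧ ∃ θ : Ω → Fin d → ℝ, Measurable[𝓕 t] θ ∧
    ∀ᵐ ω ∂μ, G ω ≤ ((x ω + dotp (θ ω) fun i => S (t+1) ω i - S t ω i : ℝ) : EReal)}

/-- Multi-period super-hedging prices in the market extended by the additional asset `C`. -/
def PricesMultiExt {Ω : Type*} {mΩ : MeasurableSpace Ω} (𝓕 : ℕ → MeasurableSpace Ω)
    (μ : Measure Ω) {d : ℕ} (S : ℕ → Ω → Fin d → ℝ) (C : ℕ → Ω → ℝ) (t T : ℕ)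
    (g : Ω → ℝ) : Set (Ω → ℝ) :=
  {x | Measurable[𝓕 t] x ∧ ∃ θ : ℕ → Ω → Fin d → ℝ, (∀ u, Measurable[𝓕 u] (θ u)) ∧
    ∃ α : ℕ → Ω → ℝ, (∀ u, Measurable[𝓕 u] (α u)) ∧
    ∃ ε : Ω → ℝ, Measurable[𝓕 T] ε ∧ (∀ᵐ ω ∂μ, 0 ≤ ε ω) ∧
    ∀ᵐ ω ∂μ, x ω + (∑ u ∈ Finset.Icc (t+1) T,
      ((dotp (θ (u-1) ω) fun i => S u ω i - S (u-1) ω i) +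
        α (u-1) ω * (C u ω - C (u-1) ω))) - ε ω = g ω}

/-- The set `R_t^T` of claims super-replicable at zero cost, one-dimensional case. -/
def RsetM {Ω : Type*} {mΩ : MeasurableSpace Ω} (𝓕 : ℕ → MeasurableSpace Ω)
    (μ : Measure Ω) (S : ℕ → Ω → ℝ) (t T : ℕ) : Set (Ω → ℝ) :=
  {X | ∃ θ : ℕ → Ω → ℝ, (∀ u, Measurable[𝓕 u] (θ u)) ∧
    ∃ ε : Ω → ℝ, Measurable[𝓕 T] ε ∧ (∀ᵐ ω ∂μ, 0 ≤ ε ω) ∧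
    ∀ᵐ ω ∂μ, X ω = (∑ u ∈ Finset.Icc (t+1) T, θ (u-1) ω * (S u ω - S (u-1) ω)) - ε ω}

/-- Closure with respect to convergence in probability. -/
def closureP {Ω : Type*} {mΩ : MeasurableSpace Ω} (μ : Measure Ω) (A : Set (Ω → ℝ)) :
    Set (Ω → ℝ) :=
  {X | ∃ f : ℕ → Ω → ℝ, (∀ n, f n ∈ A) ∧ TendstoInMeasure μ f Filter.atTop X}

/-!
Under AIP the price `y` lies between `I = essinf_H Y` and `S = esssup_H Y`. The chord of `g`
over `[I, S]` (the ray of slope `M` when `S = ∞`) dominates `g` on `[I, S] ∋ Y`, so `θ*` hedges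
`g(Y)` from the initial capital `g(I) + θ*(y - I)`.

Conversely, let `x + b(Y - y) ≥ g(Y)` with `x, b` `H`-measurable. The concave function
`φ = x + b(· - y) - g` is nonnegative at `Y`. For `c < 0` its strict superlevel set `{φ > c}` is an
open interval containing `Y`, whose endpoints, computed over the rationals, are `H`-measurable;
hence they bound `I` from above and `S` from below, and `φ ≥ 0` on `[I, S]`. An affine function
above `g` at `I` and `S` lies above the chord, so `x ≥ g(I) + θ*(y - I)`.
-/

open Topology

section Superlevel

variable {φ : ℝ → ℝ} {c : ℝ}

def ratInfSuperlevel (φ : ℝ → ℝ) (c : ℝ) : EReal :=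
  ⨅ r : ℚ, if c < φ r then ((r : ℝ) : EReal) else ⊤

def ratSupSuperlevel (φ : ℝ → ℝ) (c : ℝ) : EReal :=
  ⨆ r : ℚ, if c < φ r then ((r : ℝ) : EReal) else ⊥

lemma ratInfSuperlevel_le (hφ : Continuous φ) {v : ℝ} (hv : c < φ v) :
    ratInfSuperlevel φ c ≤ v := by
  refine le_of_forall_gt_imp_ge_of_dense fun w hw => ?_
  obtain ⟨r, hr, hrw⟩ := Rat.denseRange_cast.exists_mem_open
    ((isOpen_lt continuous_const hφ).inter
      (isOpen_lt continuous_coe_real_ereal continuous_const)) ⟨v, hv, hw⟩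
  rw [mem_ofPred_eq] at hr hrw
  exact (iInf_le _ r).trans ((if_pos hr).le.trans hrw.le)

lemma le_ratSupSuperlevel (hφ : Continuous φ) {v : ℝ} (hv : c < φ v) :
    (v : EReal) ≤ ratSupSuperlevel φ c := by
  refine le_of_forall_lt_imp_le_of_dense fun w hw => ?_
  obtain ⟨r, hr, hwr⟩ := Rat.denseRange_cast.exists_mem_open
    ((isOpen_lt continuous_const hφ).inter
      (isOpen_lt continuous_const continuous_coe_real_ereal)) ⟨v, hv, hw⟩
  rw [mem_ofPred_eq] at hr hwr
  exact hwr.le.trans (le_iSup_of_le r (if_pos hr).ge)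

lemma exists_lt_of_ratInfSuperlevel_lt {t : EReal} (h : ratInfSuperlevel φ c < t) :
    ∃ u : ℝ, (u : EReal) < t ∧ c < φ u := by
  obtain ⟨r, hr⟩ := iInf_lt_iff.1 h
  by_cases hc : c < φ r
  · rw [if_pos hc] at hr
    exact ⟨r, hr, hc⟩
  · rw [if_neg hc] at hr
    exact absurd hr not_top_lt

lemma exists_gt_of_lt_ratSupSuperlevel {t : EReal} (h : t < ratSupSuperlevel φ c) :
    ∃ u : ℝ, t < u ∧ c < φ u := by
  obtain ⟨r, hr⟩ := lt_iSup_iff.1 h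
  by_cases hc : c < φ r
  · rw [if_pos hc] at hr
    exact ⟨r, hr, hc⟩
  · rw [if_neg hc] at hr
    exact absurd hr not_lt_bot

lemma measurable_ratInfSuperlevel {Ω : Type*} {m : MeasurableSpace Ω} {φ : Ω → ℝ → ℝ}
    (hφ : ∀ t, Measurable[m] fun ω => φ ω t) (c : ℝ) :
    Measurable[m] fun ω => ratInfSuperlevel (φ ω) c :=
  .iInf fun r => .ite (measurableSet_lt measurable_const (hφ r)) measurable_const measurable_const

lemma measurable_ratSupSuperlevel {Ω : Type*} {m : MeasurableSpace Ω} {φ : Ω → ℝ → ℝ}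
    (hφ : ∀ t, Measurable[m] fun ω => φ ω t) (c : ℝ) :
    Measurable[m] fun ω => ratSupSuperlevel (φ ω) c :=
  .iSup fun r => .ite (measurableSet_lt measurable_const (hφ r)) measurable_const measurable_const

/-- Near `t`, where `φ < c` by continuity, there are points of `{φ > c}` on both sides of `t`;
as that set is an interval, it contains `t`. -/
lemma ConcaveOn.le_apply_of_ratSuperlevel_bounds (hφ : ConcaveOn ℝ univ φ) {t : ℝ}
    (hlo : ratInfSuperlevel φ c ≤ t) (hhi : (t : EReal) ≤ ratSupSuperlevel φ c) : c ≤ φ t := by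
  by_contra! ht
  have hcont : ContinuousAt φ t := (hφ.continuousOn isOpen_univ).continuousAt univ_mem
  obtain ⟨ε, hε, hnear⟩ := Metric.eventually_nhds_iff.1 (hcont.eventually (gt_mem_nhds ht))
  have hfar : ∀ u, c < φ u → ε ≤ |u - t| := fun u hu => by
    by_contra! h
    exact (hnear (by rwa [Real.dist_eq])).not_gt hu
  obtain ⟨u, hu, hcu⟩ := exists_lt_of_ratInfSuperlevel_lt
    (hlo.trans_lt (EReal.coe_lt_coe_iff.2 (lt_add_of_pos_right t hε)))
  obtain ⟨w, hw, hcw⟩ := exists_gt_of_lt_ratSupSuperlevel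
    ((EReal.coe_lt_coe_iff.2 (sub_lt_self t hε)).trans_le hhi)
  have hut : u ≤ t := by
    have := hfar u hcu
    rw [EReal.coe_lt_coe_iff] at hu
    cases abs_cases (u - t) <;> linarith
  have htw : t ≤ w := by
    have := hfar w hcw
    rw [EReal.coe_lt_coe_iff] at hw
    cases abs_cases (w - t) <;> linarith
  exact ht.not_gt ((hφ.convex_gt c).ordConnected.out ⟨mem_univ u, hcu⟩ ⟨mem_univ w, hcw⟩
    ⟨hut, htw⟩).2

end Superlevel

lemma ae_nonneg_between_condEss {Ω : Type*} {H : MeasurableSpace Ω} [MeasurableSpace Ω]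
    {μ : Measure Ω} {Y : Ω → ℝ} {I S : Ω → EReal} (hI : IsCondEssInf H μ Y I)
    (hS : IsCondEssSup H μ Y S) {φ : Ω → ℝ → ℝ} (hφm : ∀ t, Measurable[H] fun ω => φ ω t)
    (hφ : ∀ ω, ConcaveOn ℝ univ (φ ω)) (hφY : ∀ᵐ ω ∂μ, 0 ≤ φ ω (Y ω)) :
    ∀ᵐ ω ∂μ, ∀ t : ℝ, I ω ≤ t → (t : EReal) ≤ S ω → 0 ≤ φ ω t := by
  have hcont (ω : Ω) : Continuous (φ ω) :=
    continuousOn_univ.1 ((hφ ω).continuousOn isOpen_univ)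
  have hneg (n : ℕ) : ∀ᵐ ω ∂μ, -(1 / (n + 1) : ℝ) < φ ω (Y ω) := by
    filter_upwards [hφY] with ω h
    linarith [Nat.one_div_pos_of_nat (α := ℝ) (n := n)]
  have hlo (n : ℕ) : ∀ᵐ ω ∂μ, ratInfSuperlevel (φ ω) (-(1 / (n + 1))) ≤ I ω :=
    hI.2.2 _ (measurable_ratInfSuperlevel hφm _)
      ((hneg n).mono fun ω h => ratInfSuperlevel_le (hcont ω) h)
  have hhi (n : ℕ) : ∀ᵐ ω ∂μ, S ω ≤ ratSupSuperlevel (φ ω) (-(1 / (n + 1))) :=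
    hS.2.2 _ (measurable_ratSupSuperlevel hφm _)
      ((hneg n).mono fun ω h => le_ratSupSuperlevel (hcont ω) h)
  filter_upwards [ae_all_iff.2 hlo, ae_all_iff.2 hhi] with ω hlo hhi t hIt htS
  have hlim : Tendsto (fun n : ℕ => -(1 / ((n : ℝ) + 1))) atTop (𝓝 0) := by
    simpa using (tendsto_one_div_add_atTop_nhds_zero_nat (𝕜 := ℝ)).neg
  exact le_of_tendsto' hlim fun n =>
    (hφ ω).le_apply_of_ratSuperlevel_bounds ((hlo n).trans hIt) (htS.trans (hhi n))

section Slope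

variable {g : ℝ → ℝ} {M : ℝ}

lemma ConvexOn.concaveOn_affine_sub (hg : ConvexOn ℝ univ g) (x b y : ℝ) :
    ConcaveOn ℝ univ fun t => x + b * (t - y) - g t := by
  refine ((((LinearMap.mul ℝ ℝ b).concaveOn convex_univ).add_const (x - b * y)).sub hg).congr
    fun t _ => ?_
  simp only [Pi.sub_apply, Pi.add_apply, LinearMap.mul_apply']
  ring

lemma tendsto_affine_div_atTop (a b : ℝ) :
    Tendsto (fun t : ℝ => (a + b * t) / t) atTop (𝓝 b) := by
  have h := (tendsto_const_nhds (x := a)).div_atTop tendsto_id |>.add (tendsto_const_nhds (x := b))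
  rw [zero_add] at h
  refine h.congr' ?_
  filter_upwards [eventually_ne_atTop 0] with t ht
  simp only [id]
  field_simp

lemma le_of_tendsto_div_of_eventually_le_affine
    (hlim : Tendsto (fun t => g t / t) atTop (𝓝 M)) {a b : ℝ}
    (hle : ∀ᶠ t in atTop, g t ≤ a + b * t) : M ≤ b :=
  le_of_tendsto_of_tendsto hlim (tendsto_affine_div_atTop a b) <| by
    filter_upwards [hle, eventually_gt_atTop 0] with t h ht
    exact div_le_div_of_nonneg_right h ht.le

lemma ge_of_tendsto_div_of_eventually_affine_le
    (hlim : Tendsto (fun t => g t / t) atTop (𝓝 M)) {a b : ℝ}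
    (hle : ∀ᶠ t in atTop, a + b * t ≤ g t) : b ≤ M :=
  le_of_tendsto_of_tendsto (tendsto_affine_div_atTop a b) hlim <| by
    filter_upwards [hle, eventually_gt_atTop 0] with t h ht
    exact div_le_div_of_nonneg_right h ht.le

/-- The slopes of a convex function increase to its asymptotic slope. -/
lemma ConvexOn.slope_le_of_tendsto_div (hg : ConvexOn ℝ univ g)
    (hlim : Tendsto (fun t => g t / t) atTop (𝓝 M)) {a t : ℝ} (hat : a < t) :
    (g t - g a) / (t - a) ≤ M := by
  set s := (g t - g a) / (t - a)
  refine ge_of_tendsto_div_of_eventually_affine_le hlim (a := g a - s * a) ?_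
  filter_upwards [eventually_gt_atTop t] with u hu
  have hsu := hg.secant_mono (mem_univ a) (mem_univ t) (mem_univ u) hat.ne' (hat.trans hu).ne'
    hu.le
  have := (le_div_iff₀ (sub_pos.2 (hat.trans hu))).1 hsu
  linarith

end Slope

section ThetaStar

variable {g : ℝ → ℝ} {M : ℝ}

/-- For finite `S` the convention `θ* = 0` at `S = I` agrees with `0 / 0 = 0`. -/
lemma thetaStar_coe (g : ℝ → ℝ) (M I s : ℝ) :
    thetaStar g M I s = (g s - g I) / (s - I) := by
  by_cases h : s = I <;> simp [thetaStar, h]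

lemma thetaStar_top (g : ℝ → ℝ) (M I : ℝ) : thetaStar g M I ⊤ = M := by
  simp [thetaStar]

lemma measurable_thetaStar {Ω : Type*} {m : MeasurableSpace Ω} (hg : Measurable g) (M : ℝ)
    {I : Ω → ℝ} {S : Ω → EReal} (hI : Measurable[m] I) (hS : Measurable[m] S) :
    Measurable[m] fun ω => thetaStar g M (I ω) (S ω) := by
  have hSr : Measurable[m] fun ω => (S ω).toReal := measurable_ereal_toReal.comp hS
  exact .ite (measurableSet_eq_fun hS (measurable_coe_real_ereal.comp hI)) measurable_const
    (.ite (hS (measurableSet_singleton ⊤)) measurable_const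
      (((hg.comp hSr).sub (hg.comp hI)).div (hSr.sub hI)))

lemma ConvexOn.le_add_thetaStar_mul (hg : ConvexOn ℝ univ g)
    (hlim : Tendsto (fun t => g t / t) atTop (𝓝 M)) {I t : ℝ} {S : EReal} (hIt : I ≤ t)
    (htS : (t : EReal) ≤ S) : g t ≤ g I + thetaStar g M I S * (t - I) := by
  rcases hIt.eq_or_lt with rfl | hIt
  · simp
  have hslope : (g t - g I) ≤ thetaStar g M I S * (t - I) := by
    rw [← div_le_iff₀ (sub_pos.2 hIt)]
    induction S using EReal.rec with
    | bot => exact absurd htS (EReal.bot_lt_coe t).not_ge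
    | coe s =>
      have hts : t ≤ s := EReal.coe_le_coe_iff.1 htS
      rw [thetaStar_coe]
      exact hg.secant_mono (mem_univ I) (mem_univ t) (mem_univ s) hIt.ne'
        (hIt.trans_le hts).ne' hts
    | top => exact (thetaStar_top g M I).symm ▸ hg.slope_le_of_tendsto_div hlim hIt
  linarith

lemma add_thetaStar_mul_le (hlim : Tendsto (fun t => g t / t) atTop (𝓝 M)) {I y x b : ℝ}
    {S : EReal} (hIy : I ≤ y) (hyS : (y : EReal) ≤ S)
    (hle : ∀ t : ℝ, I ≤ t → (t : EReal) ≤ S → g t ≤ x + b * (t - y)) :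
    g I + thetaStar g M I S * (y - I) ≤ x := by
  have hgI := hle I le_rfl ((EReal.coe_le_coe_iff.2 hIy).trans hyS)
  induction S using EReal.rec with
  | bot => exact absurd hyS (EReal.bot_lt_coe y).not_ge
  | coe s =>
    have hys : y ≤ s := EReal.coe_le_coe_iff.1 hyS
    have hgs := hle s (hIy.trans hys) le_rfl
    rw [thetaStar_coe]
    rcases (hIy.trans hys).eq_or_lt with rfl | hIs
    · simpa [le_antisymm hys hIy] using hgI
    · have hchord : (g s - g I) * (y - I) ≤ (x - g I) * (s - I) := by
        nlinarith [mul_le_mul_of_nonneg_right hgs (sub_nonneg.2 hIy),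
          mul_le_mul_of_nonneg_right hgI (sub_nonneg.2 hys)]
      have := (div_le_iff₀ (sub_pos.2 hIs)).2 hchord
      rw [div_mul_eq_mul_div]
      linarith
  | top =>
    have hMb : M ≤ b := le_of_tendsto_div_of_eventually_le_affine hlim (a := x - b * y) <| by
      filter_upwards [eventually_ge_atTop I] with t ht
      linarith [hle t ht le_top]
    rw [thetaStar_top]
    nlinarith [mul_le_mul_of_nonneg_right hMb (sub_nonneg.2 hIy)]

end ThetaStar

lemma IsEssInfSet.ae_eq_of_mem_of_ae_le {Ω : Type*} [MeasurableSpace Ω] {μ : Measure Ω}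
    {P : Set (Ω → ℝ)} {p : Ω → EReal} (hp : IsEssInfSet μ P p) {x : Ω → ℝ} (hxm : Measurable x)
    (hx : x ∈ P) (hle : ∀ x' ∈ P, ∀ᵐ ω ∂μ, x ω ≤ x' ω) : ∀ᵐ ω ∂μ, p ω = x ω := by
  have hge := hp.2.2 _ (measurable_coe_real_ereal.comp hxm) fun x' hx' =>
    (hle x' hx').mono fun ω h => EReal.coe_le_coe_iff.2 h
  filter_upwards [hp.2.1 x hx, hge] with ω h₁ h₂
  exact le_antisymm h₁ h₂

section AIP

variable {Ω : Type*} {H : MeasurableSpace Ω} [MeasurableSpace Ω] {μ : Measure Ω}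
  {y Y : Ω → ℝ} {p0 : Ω → EReal}

lemma ae_nonneg_of_mem_prices1_zero (hp0 : IsEssInfSet μ (Prices1 H μ y Y fun _ => 0) p0)
    (hAIP : p0 =ᵐ[μ] fun _ => 0) {x : Ω → ℝ} (hx : x ∈ Prices1 H μ y Y fun _ => 0) :
    ∀ᵐ ω ∂μ, 0 ≤ x ω := by
  filter_upwards [hp0.2.1 x hx, hAIP] with ω h h0
  rw [h0] at h
  exact_mod_cast h

/-- Where `y < ζ`, buying one unit turns `y - ζ < 0` into a price of the zero claim. -/
lemma ae_le_price_of_AIP (hp0 : IsEssInfSet μ (Prices1 H μ y Y fun _ => 0) p0)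
    (hAIP : p0 =ᵐ[μ] fun _ => 0) (hy : Measurable[H] y) {ζ : Ω → EReal}
    (hζ : Measurable[H] ζ) (hζY : ∀ᵐ ω ∂μ, ζ ω ≤ Y ω) : ∀ᵐ ω ∂μ, ζ ω ≤ y ω := by
  have hA : MeasurableSet[H] {ω | (y ω : EReal) < ζ ω} :=
    measurableSet_lt (measurable_coe_real_ereal.comp hy) hζ
  have hreal {ω : Ω} (hζY : ζ ω ≤ Y ω) (h : (y ω : EReal) < ζ ω) :
      ((ζ ω).toReal : EReal) = ζ ω :=
    EReal.coe_toReal (hζY.trans_lt (EReal.coe_lt_top _)).ne ((EReal.bot_lt_coe _).trans h).ne'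
  have hx : (fun ω => if (y ω : EReal) < ζ ω then y ω - (ζ ω).toReal else 0) ∈
      Prices1 H μ y Y fun _ => 0 := by
    refine ⟨.ite hA (hy.sub (measurable_ereal_toReal.comp hζ)) measurable_const,
      fun ω => if (y ω : EReal) < ζ ω then 1 else 0, .ite hA measurable_const measurable_const, ?_⟩
    filter_upwards [hζY] with ω hζY
    split_ifs with h
    · have : (ζ ω).toReal ≤ Y ω := EReal.coe_le_coe_iff.1 (hreal hζY h ▸ hζY)
      linarith
    · simp
  filter_upwards [ae_nonneg_of_mem_prices1_zero hp0 hAIP hx, hζY] with ω hx hζY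
  by_contra! h
  rw [if_pos h] at hx
  exact h.not_ge (hreal hζY h ▸ EReal.coe_le_coe_iff.2 (by linarith))

/-- Where `ζ < y`, selling one unit turns `ζ - y < 0` into a price of the zero claim. -/
lemma ae_price_le_of_AIP (hp0 : IsEssInfSet μ (Prices1 H μ y Y fun _ => 0) p0)
    (hAIP : p0 =ᵐ[μ] fun _ => 0) (hy : Measurable[H] y) {ζ : Ω → EReal}
    (hζ : Measurable[H] ζ) (hYζ : ∀ᵐ ω ∂μ, (Y ω : EReal) ≤ ζ ω) :
    ∀ᵐ ω ∂μ, (y ω : EReal) ≤ ζ ω := by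
  have hA : MeasurableSet[H] {ω | ζ ω < y ω} :=
    measurableSet_lt hζ (measurable_coe_real_ereal.comp hy)
  have hreal {ω : Ω} (hYζ : (Y ω : EReal) ≤ ζ ω) (h : ζ ω < y ω) :
      ((ζ ω).toReal : EReal) = ζ ω :=
    EReal.coe_toReal (h.trans (EReal.coe_lt_top _)).ne ((EReal.bot_lt_coe _).trans_le hYζ).ne'
  have hx : (fun ω => if ζ ω < y ω then (ζ ω).toReal - y ω else 0) ∈
      Prices1 H μ y Y fun _ => 0 := by
    refine ⟨.ite hA ((measurable_ereal_toReal.comp hζ).sub hy) measurable_const,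
      fun ω => if ζ ω < y ω then -1 else 0, .ite hA measurable_const measurable_const, ?_⟩
    filter_upwards [hYζ] with ω hYζ
    split_ifs with h
    · have : Y ω ≤ (ζ ω).toReal := EReal.coe_le_coe_iff.1 (hreal hYζ h ▸ hYζ)
      linarith
    · simp
  filter_upwards [ae_nonneg_of_mem_prices1_zero hp0 hAIP hx, hYζ] with ω hx hYζ
  by_contra! h
  rw [if_pos h] at hx
  exact h.not_ge (hreal hYζ h ▸ EReal.coe_le_coe_iff.2 (by linarith))

end AIP

theorem superhedging_cost_convex_payoff_dim_one_general
    {Ω : Type*} (H : MeasurableSpace Ω) [mΩ : MeasurableSpace Ω] (μ : Measure Ω)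
    (hHF : H ≤ mΩ)
    (y Y : Ω → ℝ) (hy : Measurable[H] y)
    (p0 : Ω → EReal)
    (hp0 : IsEssInfSet μ (Prices1 H μ y Y fun _ => (0:ℝ)) p0)
    (hAIP : p0 =ᵐ[μ] fun _ => (0:EReal))
    (g : ℝ → ℝ) (hgconv : ConvexOn ℝ Set.univ g)
    (M : ℝ) (hlim : Tendsto (fun x => g x / x) atTop (nhds M))
    (I : Ω → ℝ) (hImeas : Measurable[H] I)
    (hI : IsCondEssInf H μ Y fun ω => ((I ω : ℝ) : EReal))
    (S : Ω → EReal) (hS : IsCondEssSup H μ Y S)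
    (pg : Ω → EReal)
    (hpg : IsEssInfSet μ (Prices1 H μ y Y fun ω => g (Y ω)) pg) :
    (∀ᵐ ω ∂μ,
      pg ω = ((g (I ω) + thetaStar g M (I ω) (S ω) * (y ω - I ω) : ℝ) : EReal)) ∧
    (fun ω => g (I ω) + thetaStar g M (I ω) (S ω) * (y ω - I ω)) ∈
      Prices1 H μ y Y (fun ω => g (Y ω)) ∧
    ∀ᵐ ω ∂μ, g (Y ω) ≤ (g (I ω) + thetaStar g M (I ω) (S ω) * (y ω - I ω))
        + thetaStar g M (I ω) (S ω) * (Y ω - y ω) := by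
  have hg : Measurable g := (continuousOn_univ.1 (hgconv.continuousOn isOpen_univ)).measurable
  have hIy := ae_le_price_of_AIP hp0 hAIP hy hI.1 hI.2.1
  have hyS := ae_price_le_of_AIP hp0 hAIP hy hS.1 hS.2.1
  have hθ := measurable_thetaStar hg M hImeas hS.1
  have hsuper : ∀ᵐ ω ∂μ, g (Y ω) ≤ (g (I ω) + thetaStar g M (I ω) (S ω) * (y ω - I ω))
      + thetaStar g M (I ω) (S ω) * (Y ω - y ω) := by
    filter_upwards [hI.2.1, hS.2.1] with ω hIY hYS
    linarith [hgconv.le_add_thetaStar_mul hlim (EReal.coe_le_coe_iff.1 hIY) hYS]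
  have hmem : (fun ω => g (I ω) + thetaStar g M (I ω) (S ω) * (y ω - I ω)) ∈
      Prices1 H μ y Y (fun ω => g (Y ω)) :=
    ⟨(hg.comp hImeas).add (hθ.mul (hy.sub hImeas)), _, hθ, hsuper⟩
  refine ⟨hpg.ae_eq_of_mem_of_ae_le (hmem.1.mono hHF le_rfl) hmem ?_, hmem, hsuper⟩
  rintro x ⟨hx, b, hb, hxb⟩
  have hφ := ae_nonneg_between_condEss hI hS (φ := fun ω t => x ω + b ω * (t - y ω) - g t)
    (fun t => (hx.add (hb.mul (measurable_const.sub hy))).sub measurable_const)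
    (fun ω => hgconv.concaveOn_affine_sub (x ω) (b ω) (y ω)) (hxb.mono fun ω h => sub_nonneg.2 h)
  filter_upwards [hφ, hIy, hyS] with ω hφ hIy hyS
  exact add_thetaStar_mul_le hlim (EReal.coe_le_coe_iff.1 hIy) hyS fun t hIt htS =>
    sub_nonneg.1 (hφ t (EReal.coe_le_coe_iff.2 hIt) htS)

/-- under AIP, for `d = 1` and a nonnegative convex payoff function `g`
with `lim_{x→∞} g(x)/x = M < ∞`, the infimum super-hedging cost is
`g(essinf_H Y) + θ^* (y - essinf_H Y)` and it is itself a super-hedging price,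
attained by the strategy `θ^*`. -/
theorem superhedging_cost_convex_payoff_dim_one
    {Ω : Type*} (H : MeasurableSpace Ω) [mΩ : MeasurableSpace Ω] (μ : Measure Ω)
    [IsProbabilityMeasure μ] [μ.IsComplete] (hHF : H ≤ mΩ)
    (hHcomp : ∀ s : Set Ω, μ s = 0 → MeasurableSet[H] s)
    (y Y : Ω → ℝ) (hy : Measurable[H] y) (hY : Measurable[mΩ] Y)
    (hy0 : ∀ ω, 0 ≤ y ω) (hY0 : ∀ ω, 0 ≤ Y ω)
    (p0 : Ω → EReal)
    (hp0 : IsEssInfSet μ (Prices1 H μ y Y fun _ => (0:ℝ)) p0)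
    (hAIP : p0 =ᵐ[μ] fun _ => (0:EReal))
    (g : ℝ → ℝ) (hgconv : ConvexOn ℝ Set.univ g) (hg0 : ∀ x, 0 ≤ g x)
    (M : ℝ) (hM : 0 ≤ M) (hlim : Tendsto (fun x => g x / x) atTop (nhds M))
    (I : Ω → ℝ) (hImeas : Measurable[H] I)
    (hI : IsCondEssInf H μ Y fun ω => ((I ω : ℝ) : EReal))
    (S : Ω → EReal) (hS : IsCondEssSup H μ Y S)
    (pg : Ω → EReal)
    (hpg : IsEssInfSet μ (Prices1 H μ y Y fun ω => g (Y ω)) pg) :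
    (∀ᵐ ω ∂μ,
      pg ω = ((g (I ω) + thetaStar g M (I ω) (S ω) * (y ω - I ω) : ℝ) : EReal)) ∧
    (fun ω => g (I ω) + thetaStar g M (I ω) (S ω) * (y ω - I ω)) ∈
      Prices1 H μ y Y (fun ω => g (Y ω)) ∧
    ∀ᵐ ω ∂μ, g (Y ω) ≤ (g (I ω) + thetaStar g M (I ω) (S ω) * (y ω - I ω))
        + thetaStar g M (I ω) (S ω) * (Y ω - y ω) :=
  superhedging_cost_convex_payoff_dim_one_general H (mΩ := mΩ) μ hHF y Y hy p0 hp0 hAIP g hgconv M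
    hlim I hImeas hI S hS pg hpg
end
end

section
/- In the multi-period market with horizon T, for every g_T ∈ L^0(ℝ, F_T) and t ∈ {0, …, T−1}: (i) P_{t,T}(g_T) = P_{t,t+1}( P_{t+1,T}(g_T) ) and π_{t,T}(g_T) ≥ π_{t,t+1}( π_{t+1,T}(g_T) ); (ii) if moreover π_{t+1,T}(g_T) ∈ P_{t+1,T}(g_T), then P_{t,T}(g_T) = P_{t,t+1}( π_{t+1,T}(g_T) ) and π_{t,T}(g_T) = π_{t,t+1}( π_{t+1,T}(g_T) ). -/
open MeasureTheory Set Filter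
open scoped Classical

noncomputable section

lemma meas_add0 {Ω : Type*} {m : MeasurableSpace Ω} {f g : Ω → ℝ}
    (hf : Measurable[m] f) (hg : Measurable[m] g) :
    Measurable[m] fun ω => f ω + g ω := by
  letI := m; exact hf.add hg

lemma meas_sub0 {Ω : Type*} {m : MeasurableSpace Ω} {f g : Ω → ℝ}
    (hf : Measurable[m] f) (hg : Measurable[m] g) :
    Measurable[m] fun ω => f ω - g ω := by
  letI := m; exact hf.sub hg

lemma meas_pi0 {Ω : Type*} {m : MeasurableSpace Ω} {d : ℕ} {f : Ω → Fin d → ℝ}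
    (hf : ∀ i, Measurable[m] fun ω => f ω i) : Measurable[m] f := by
  letI := m; exact measurable_pi_lambda _ hf

lemma measurable_dotp_aux {Ω : Type*} {m : MeasurableSpace Ω} {d : ℕ}
    {θ Y : Ω → Fin d → ℝ} (hθ : Measurable[m] θ) (hY : Measurable[m] Y) :
    Measurable[m] (fun ω => dotp (θ ω) (Y ω)) := by
  unfold dotp
  exact Finset.measurable_sum _ fun i _ =>
    ((measurable_pi_apply i).comp hθ).mul ((measurable_pi_apply i).comp hY)

lemma icc_split {t T : ℕ} (ht : t < T) :
    Finset.Icc (t+1) T = insert (t+1) (Finset.Icc (t+2) T) := by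
  ext u
  simp only [Finset.mem_Icc, Finset.mem_insert]
  omega

/-- Forward step: from a multi-period price we get a one-step decomposition. -/
lemma dp_forward {Ω : Type*} [mΩ : MeasurableSpace Ω] (μ : Measure Ω)
    (T : ℕ) (𝓕 : ℕ → MeasurableSpace Ω) (hmono : Monotone 𝓕)
    {d : ℕ} (S : ℕ → Ω → Fin d → ℝ) (hSadapt : ∀ t, Measurable[𝓕 t] (S t))
    (g : Ω → ℝ) (t : ℕ) (ht : t < T) {x : Ω → ℝ}
    (hx : x ∈ PricesMulti 𝓕 μ S t T g) :
    ∃ x' ∈ PricesMulti 𝓕 μ S (t+1) T g,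
      x ∈ OneStepPrices 𝓕 μ S t fun ω => ((x' ω : ℝ) : EReal) := by
  obtain ⟨hxm, θ, hθ, ε, hεm, hε0, heq⟩ := hx
  have hΔSm : Measurable[𝓕 (t+1)] (fun ω => (fun i => S (t+1) ω i - S t ω i)) :=
    meas_pi0 fun i =>
      meas_sub0 ((measurable_pi_apply i).comp (hSadapt (t+1)))
        ((measurable_pi_apply i).comp ((hSadapt t).mono (hmono (Nat.le_succ t)) le_rfl))
  refine ⟨fun ω => x ω + dotp (θ t ω) fun i => S (t+1) ω i - S t ω i,
    ⟨?_, θ, hθ, ε, hεm, hε0, ?_⟩, ?_⟩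
  · exact meas_add0 (hxm.mono (hmono (Nat.le_succ t)) le_rfl)
      (measurable_dotp_aux ((hθ t).mono (hmono (Nat.le_succ t)) le_rfl) hΔSm)
  · filter_upwards [heq] with ω hω
    rw [icc_split ht, Finset.sum_insert (by simp [Finset.mem_Icc])] at hω
    simp only [Nat.add_sub_cancel] at hω
    linarith
  · exact ⟨hxm, θ t, hθ t, Filter.Eventually.of_forall fun ω => le_refl _⟩

/-- Backward step: a one-step super-hedge of a time-`(t+1)` price is a
multi-period price at time `t`. -/
lemma dp_backward {Ω : Type*} [mΩ : MeasurableSpace Ω] (μ : Measure Ω)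
    (T : ℕ) (𝓕 : ℕ → MeasurableSpace Ω) (hmono : Monotone 𝓕)
    {d : ℕ} (S : ℕ → Ω → Fin d → ℝ) (hSadapt : ∀ t, Measurable[𝓕 t] (S t))
    (g : Ω → ℝ) (t : ℕ) (ht : t < T) {x x' : Ω → ℝ} {θ : Ω → Fin d → ℝ}
    (hxm : Measurable[𝓕 t] x) (hθm : Measurable[𝓕 t] θ)
    (hineq : ∀ᵐ ω ∂μ, x' ω ≤ x ω + dotp (θ ω) fun i => S (t+1) ω i - S t ω i)
    (hx' : x' ∈ PricesMulti 𝓕 μ S (t+1) T g) :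
    x ∈ PricesMulti 𝓕 μ S t T g := by
  obtain ⟨hx'm, θ', hθ', ε', hε'm, hε'0, heq'⟩ := hx'
  set ΔS : Ω → Fin d → ℝ := fun ω i => S (t+1) ω i - S t ω i with hΔS
  have htT : t ≤ T := le_of_lt ht
  have ht1T : t + 1 ≤ T := ht
  refine ⟨hxm, fun u => if u = t then θ else θ' u, ?_,
    fun ω => ε' ω + (x ω + dotp (θ ω) (ΔS ω) - x' ω), ?_, ?_, ?_⟩
  · intro u
    by_cases hu : u = t
    · subst hu; simpa using hθm
    · simpa [hu] using hθ' u
  · have hΔSm : Measurable[𝓕 T] ΔS :=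
      meas_pi0 fun i =>
        meas_sub0 ((measurable_pi_apply i).comp ((hSadapt (t+1)).mono (hmono ht1T) le_rfl))
          ((measurable_pi_apply i).comp ((hSadapt t).mono (hmono htT) le_rfl))
    exact meas_add0 hε'm (meas_sub0 (meas_add0 (hxm.mono (hmono htT) le_rfl)
      (measurable_dotp_aux (hθm.mono (hmono htT) le_rfl) hΔSm))
      (hx'm.mono (hmono ht1T) le_rfl))
  · filter_upwards [hε'0, hineq] with ω h1 h2
    have : 0 ≤ x ω + dotp (θ ω) (ΔS ω) - x' ω := by simpa [ΔS] using sub_nonneg.mpr h2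
    linarith
  · filter_upwards [heq'] with ω hω
    have hsum : (∑ u ∈ Finset.Icc (t+1) T,
        dotp ((if u - 1 = t then θ else θ' (u-1)) ω) fun i => S u ω i - S (u-1) ω i)
        = dotp (θ ω) (ΔS ω) + ∑ u ∈ Finset.Icc (t+2) T,
            dotp (θ' (u-1) ω) fun i => S u ω i - S (u-1) ω i := by
      rw [icc_split ht, Finset.sum_insert (by simp [Finset.mem_Icc])]
      congr 1
      · simp [ΔS]
      · refine Finset.sum_congr rfl fun u hu => ?_
        have : u - 1 ≠ t := by
          simp only [Finset.mem_Icc] at hu; omega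
        simp [this]
    calc x ω + (∑ u ∈ Finset.Icc (t+1) T,
          dotp ((if u - 1 = t then θ else θ' (u-1)) ω) fun i => S u ω i - S (u-1) ω i)
          - (ε' ω + (x ω + dotp (θ ω) (ΔS ω) - x' ω))
        = x' ω + (∑ u ∈ Finset.Icc (t+2) T,
            dotp (θ' (u-1) ω) fun i => S u ω i - S (u-1) ω i) - ε' ω := by
          rw [hsum]; ring
      _ = g ω := hω

/-- dynamic programming principle for multi-period super-hedging
prices: `P_{t,T}(g_T) = P_{t,t+1}(P_{t+1,T}(g_T))` and
`π_{t,T}(g_T) ≥ π_{t,t+1}(π_{t+1,T}(g_T))`; when `π_{t+1,T}(g_T) ∈ P_{t+1,T}(g_T)`,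
`P_{t,T}(g_T) = P_{t,t+1}(π_{t+1,T}(g_T))` and equality of the costs holds. -/
theorem multiperiod_dynamic_programming
    {Ω : Type*} [mΩ : MeasurableSpace Ω] (μ : Measure Ω)
    [IsProbabilityMeasure μ] [μ.IsComplete]
    (T : ℕ) (𝓕 : ℕ → MeasurableSpace Ω) (hmono : Monotone 𝓕) (hle : ∀ t, 𝓕 t ≤ mΩ)
    (hcomp : ∀ t, ∀ s : Set Ω, μ s = 0 → MeasurableSet[𝓕 t] s)
    {d : ℕ} (S : ℕ → Ω → Fin d → ℝ) (hSadapt : ∀ t, Measurable[𝓕 t] (S t))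
    (hS0 : ∀ t ω i, 0 ≤ S t ω i)
    (g : Ω → ℝ) (hg : Measurable[𝓕 T] g)
    (t : ℕ) (ht : t < T)
    (π1 : Ω → EReal) (hπ1 : IsEssInfSet μ (PricesMulti 𝓕 μ S (t+1) T g) π1)
    (πloc : Ω → EReal) (hπloc : IsEssInfSet μ (OneStepPrices 𝓕 μ S t π1) πloc)
    (πt : Ω → EReal) (hπt : IsEssInfSet μ (PricesMulti 𝓕 μ S t T g) πt) :
    (PricesMulti 𝓕 μ S t T g =
        {x | ∃ x' ∈ PricesMulti 𝓕 μ S (t+1) T g,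
          x ∈ OneStepPrices 𝓕 μ S t fun ω => ((x' ω : ℝ) : EReal)} ∧
      ∀ᵐ ω ∂μ, πloc ω ≤ πt ω) ∧
    ((∃ r ∈ PricesMulti 𝓕 μ S (t+1) T g, (fun ω => ((r ω : ℝ) : EReal)) =ᵐ[μ] π1) →
      PricesMulti 𝓕 μ S t T g = OneStepPrices 𝓕 μ S t π1 ∧ πt =ᵐ[μ] πloc) := by
  -- the set identity (i)
  have Hset : PricesMulti 𝓕 μ S t T g =
      {x | ∃ x' ∈ PricesMulti 𝓕 μ S (t+1) T g,
        x ∈ OneStepPrices 𝓕 μ S t fun ω => ((x' ω : ℝ) : EReal)} := by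
    ext x
    constructor
    · intro hx
      exact dp_forward μ T 𝓕 hmono S hSadapt g t ht hx
    · rintro ⟨x', hx', hxm, θ, hθ, hle⟩
      refine dp_backward μ T 𝓕 hmono S hSadapt g t ht hxm hθ ?_ hx'
      filter_upwards [hle] with ω hω
      exact_mod_cast hω
  -- inclusion into one-step prices of `π1` (always holds)
  have Hsub : PricesMulti 𝓕 μ S t T g ⊆ OneStepPrices 𝓕 μ S t π1 := by
    intro f hf
    obtain ⟨x', hx', hfm, θ, hθ, hle⟩ := dp_forward μ T 𝓕 hmono S hSadapt g t ht hf
    refine ⟨hfm, θ, hθ, ?_⟩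
    filter_upwards [hπ1.2.1 x' hx', hle] with ω h1 h2
    exact h1.trans h2
  -- the inequality `πloc ≤ πt`
  have HB : ∀ᵐ ω ∂μ, πloc ω ≤ πt ω :=
    hπt.2.2 πloc hπloc.1 fun f hf => hπloc.2.1 f (Hsub hf)
  refine ⟨⟨Hset, HB⟩, ?_⟩
  rintro ⟨r, hrP, hr⟩
  have Hset2 : PricesMulti 𝓕 μ S t T g = OneStepPrices 𝓕 μ S t π1 := by
    refine Set.Subset.antisymm Hsub ?_
    rintro f ⟨hfm, θ, hθ, hle⟩
    refine dp_backward μ T 𝓕 hmono S hSadapt g t ht hfm hθ ?_ hrP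
    filter_upwards [hle, hr] with ω h1 h2
    have : ((r ω : ℝ) : EReal) ≤
        ((f ω + dotp (θ ω) fun i => S (t+1) ω i - S t ω i : ℝ) : EReal) := by
      rw [h2]; exact h1
    exact_mod_cast this
  refine ⟨Hset2, ?_⟩
  have H2 : ∀ᵐ ω ∂μ, πt ω ≤ πloc ω := by
    refine hπloc.2.2 πt hπt.1 fun f hf => ?_
    rw [← Hset2] at hf
    exact hπt.2.1 f hf
  filter_upwards [HB, H2] with ω h1 h2
  exact le_antisymm h2 h1
end
end

section
/- In the multi-period market with horizon T, fix C_T ∈ L^0(ℝ, F_T) and define recursively C_t := π_{t,t+1}(C_{t+1}) for t ≤ T−1. Then the multi-period AIP condition holds for the market S if and only if AIP holds for the extended market consisting of S together with the additional asset (C_t)_{t ∈ {0,…,T}} (where strategies may also invest in C). Moreover, if AIP holds, then essinf_{F_t} C_{t+1} ≤ C_t ≤ esssup_{F_t} C_{t+1} a.s. for all t ∈ {0, …, T−1}. -/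
open MeasureTheory Set Filter
open scoped Classical

noncomputable section

/-!
Under AIP for `S`, a one-step position with `z + θ·ΔS_{t+1} ≥ 0` has `z ≥ 0`: restricted to
`{z < 0}` it is a price of the zero claim that is `≤ 0`. In the extended market, take a position
with `x + θ·ΔS_{t+1} + α (C_{t+1} - C_t) ≥ 0`. Where `α < 0` it makes `C_t - x/α` a super-hedging
price of `C_{t+1}`, hence `C_t ≤ C_t - x/α`. Where `α ≥ 0`, combining it with any price `y` of
`C_{t+1}` gives `x + α (y - C_t) ≥ 0` by one-step AIP, and passing to the essential infimum `C_t`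
of the prices gives `x ≥ 0`. Backward induction over the periods yields AIP for the extended
market. For the bounds, `esssup_{F_t} C_{t+1}` is itself a price (with `θ = 0`) where it is
finite, and `essinf_{F_t} C_{t+1}` lies below every price by one-step AIP.
-/

section

variable {Ω : Type*} {mΩ : MeasurableSpace Ω}

lemma dotp_eq_dotProduct {d : ℕ} (a b : Fin d → ℝ) : dotp a b = a ⬝ᵥ b := rfl

lemma Measurable.dotp {d : ℕ} {m : MeasurableSpace Ω} {f g : Ω → Fin d → ℝ}
    (hf : Measurable[m] f) (hg : Measurable[m] g) :
    Measurable[m] fun ω => _root_.dotp (f ω) (g ω) :=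
  Finset.measurable_sum _ fun i _ =>
    ((measurable_pi_apply i).comp hf).mul ((measurable_pi_apply i).comp hg)

/-- AIP for a family whose `t`-th member is the set of time-`t` prices of the zero claim. -/
def AIP (μ : Measure Ω) (P : ℕ → Set (Ω → ℝ)) (T : ℕ) : Prop :=
  ∀ t, t ≤ T → ∀ x ∈ P t, (∀ᵐ ω ∂μ, x ω ≤ 0) → x =ᵐ[μ] fun _ => (0:ℝ)

def OneStepAIP (𝓕 : ℕ → MeasurableSpace Ω) (μ : Measure Ω) {d : ℕ}
    (S : ℕ → Ω → Fin d → ℝ) (t : ℕ) : Prop :=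
  ∀ z : Ω → ℝ, Measurable[𝓕 t] z → ∀ θ : Ω → Fin d → ℝ, Measurable[𝓕 t] θ →
    (∀ᵐ ω ∂μ, 0 ≤ z ω + dotp (θ ω) fun i => S (t+1) ω i - S t ω i) → ∀ᵐ ω ∂μ, 0 ≤ z ω

variable {𝓕 : ℕ → MeasurableSpace Ω} {μ : Measure Ω} {d : ℕ} {S : ℕ → Ω → Fin d → ℝ}
  {t T : ℕ}

lemma AIP.mono {P Q : ℕ → Set (Ω → ℝ)} (hPQ : ∀ t, P t ⊆ Q t) (h : AIP μ Q T) : AIP μ P T :=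
  fun t ht x hx => h t ht x (hPQ t hx)

lemma AIP.of_ae_nonneg {P : ℕ → Set (Ω → ℝ)} (h : ∀ t, t ≤ T → ∀ x ∈ P t, ∀ᵐ ω ∂μ, 0 ≤ x ω) :
    AIP μ P T := fun t ht x hx hx0 => by
  filter_upwards [h t ht x hx, hx0] with ω h1 h2 using le_antisymm h2 h1

lemma measurable_increment (hmono : Monotone 𝓕) (hS : ∀ u, Measurable[𝓕 u] (S u)) (t : ℕ) :
    Measurable[𝓕 (t+1)] fun ω i => S (t+1) ω i - S t ω i :=
  (hS (t+1)).sub ((hS t).mono (hmono t.le_succ) le_rfl)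

lemma mem_pricesMulti_zero_of_oneStep (hmono : Monotone 𝓕) (hS : ∀ u, Measurable[𝓕 u] (S u))
    (htT : t < T) {x : Ω → ℝ} (hx : Measurable[𝓕 t] x) {θ : Ω → Fin d → ℝ}
    (hθ : Measurable[𝓕 t] θ)
    (hxθ : ∀ᵐ ω ∂μ, 0 ≤ x ω + dotp (θ ω) fun i => S (t+1) ω i - S t ω i) :
    x ∈ PricesMulti 𝓕 μ S t T fun _ => 0 := by
  have hsum : ∀ ω, (∑ u ∈ Finset.Icc (t+1) T, dotp ((if u - 1 = t then θ else 0) ω)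
      fun i => S u ω i - S (u-1) ω i) = dotp (θ ω) fun i => S (t+1) ω i - S t ω i := by
    intro ω
    rw [Finset.sum_eq_single_of_mem (t+1) (by simp only [Finset.mem_Icc]; omega)]
    · simp
    · intro u hu hne
      have hut : u - 1 ≠ t := by simp only [Finset.mem_Icc] at hu; omega
      simp [hut, dotp]
  have hFT : 𝓕 t ≤ 𝓕 T := hmono htT.le
  refine ⟨hx, fun u => if u = t then θ else 0, fun u => ?_,
    fun ω => x ω + dotp (θ ω) fun i => S (t+1) ω i - S t ω i,
    (hx.mono hFT le_rfl).add ((hθ.mono hFT le_rfl).dotp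
      ((measurable_increment hmono hS t).mono (hmono htT) le_rfl)),
    hxθ, ae_of_all _ fun ω => ?_⟩
  · by_cases hu : u = t
    · subst hu
      simpa using hθ
    · simp only [hu, if_false]
      exact measurable_const
  · simp only [hsum]
    ring

lemma AIP.oneStepAIP (hmono : Monotone 𝓕) (hS : ∀ u, Measurable[𝓕 u] (S u))
    (h : AIP μ (fun t => PricesMulti 𝓕 μ S t T fun _ => 0) T) (htT : t < T) :
    OneStepAIP 𝓕 μ S t := by
  intro z hz θ hθ hzθ
  set B := {ω | z ω < 0}
  have hB : MeasurableSet[𝓕 t] B := measurableSet_lt hz measurable_const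
  have hmem : B.indicator z ∈ PricesMulti 𝓕 μ S t T fun _ => 0 :=
    mem_pricesMulti_zero_of_oneStep hmono hS htT (hz.indicator hB) (hθ.indicator hB) (by
      filter_upwards [hzθ] with ω hω
      by_cases hωB : ω ∈ B
      · simpa [hωB] using hω
      · simp [hωB, dotp_eq_dotProduct])
  have hzero := h t htT.le _ hmem (ae_of_all _ fun ω => by
    by_cases hωB : ω ∈ B
    · simpa [hωB] using le_of_lt hωB
    · simp [hωB])
  filter_upwards [hzero] with ω hω
  by_contra hneg
  have hωB : ω ∈ B := not_le.mp hneg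
  simp only [hωB, Set.indicator_of_mem] at hω
  exact hneg hω.ge

lemma OneStepAIP.ae_nonneg_on (h : OneStepAIP 𝓕 μ S t) {B : Set Ω}
    (hB : MeasurableSet[𝓕 t] B) {z : Ω → ℝ} (hz : Measurable[𝓕 t] z)
    {θ : Ω → Fin d → ℝ} (hθ : Measurable[𝓕 t] θ)
    (hzθ : ∀ᵐ ω ∂μ, ω ∈ B → 0 ≤ z ω + dotp (θ ω) fun i => S (t+1) ω i - S t ω i) :
    ∀ᵐ ω ∂μ, ω ∈ B → 0 ≤ z ω := by
  have hloc := h (B.indicator z) (hz.indicator hB) (B.indicator θ) (hθ.indicator hB) (by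
    filter_upwards [hzθ] with ω hω
    by_cases hωB : ω ∈ B
    · simpa [hωB] using hω hωB
    · simp [hωB, dotp_eq_dotProduct])
  filter_upwards [hloc] with ω hω hωB
  simpa [hωB] using hω

lemma IsEssInfSet.nonempty [NeZero μ] {P : Set (Ω → ℝ)} {p : Ω → ℝ}
    (h : IsEssInfSet μ P fun ω => (p ω : EReal)) : P.Nonempty := by
  by_contra hP
  rw [Set.not_nonempty_iff_eq_empty] at hP
  obtain ⟨ω, hω⟩ := (h.2.2 (fun _ => ⊤) measurable_const (by simp [hP])).exists
  exact EReal.coe_ne_top _ (top_le_iff.mp hω)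

lemma IsEssInfSet.ae_le_of_claim_ae_le [NeZero μ] {g p : Ω → ℝ}
    (h : IsEssInfSet μ (OneStepPrices 𝓕 μ S t fun ω => (g ω : EReal)) fun ω => (p ω : EReal))
    {γ : Ω → EReal} (hγ : Measurable[𝓕 t] γ) (hgγ : ∀ᵐ ω ∂μ, (g ω : EReal) ≤ γ ω) :
    ∀ᵐ ω ∂μ, (p ω : EReal) ≤ γ ω := by
  obtain ⟨y, hy, φ, hφ, hyφ⟩ := h.nonempty
  set B := {ω | γ ω < ⊤}
  have hB : MeasurableSet[𝓕 t] B := measurableSet_lt hγ measurable_const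
  have hγB : ∀ᵐ ω ∂μ, ω ∈ B → ((γ ω).toReal : EReal) = γ ω := by
    filter_upwards [hgγ] with ω hω hωB
    exact EReal.coe_toReal hωB.ne (ne_bot_of_le_ne_bot (EReal.coe_ne_bot _) hω)
  have hmem : B.piecewise (fun ω => (γ ω).toReal) y ∈
      OneStepPrices 𝓕 μ S t fun ω => (g ω : EReal) := by
    refine ⟨hγ.ereal_toReal.piecewise hB hy, B.piecewise 0 φ,
      measurable_const.piecewise hB hφ, ?_⟩
    filter_upwards [hyφ, hgγ, hγB] with ω h1 h2 h3
    by_cases hωB : ω ∈ B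
    · simpa [hωB, h3 hωB, dotp_eq_dotProduct] using h2
    · simpa [hωB] using h1
  filter_upwards [h.2.1 _ hmem, hγB] with ω h1 h2
  by_cases hωB : ω ∈ B
  · simpa [hωB, h2 hωB] using h1
  · have hγω : ¬γ ω < ⊤ := hωB
    rw [not_lt_top_iff.mp hγω]
    exact le_top

lemma OneStepAIP.ae_le_of_isEssInfSet (h : OneStepAIP 𝓕 μ S t) (hle : 𝓕 t ≤ mΩ)
    {g c : Ω → ℝ}
    (hcg : IsEssInfSet μ (OneStepPrices 𝓕 μ S t fun ω => (g ω : EReal)) fun ω => (c ω : EReal))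
    {ι : Ω → EReal} (hι : Measurable[𝓕 t] ι) (hιg : ∀ᵐ ω ∂μ, ι ω ≤ g ω) :
    ∀ᵐ ω ∂μ, ι ω ≤ c ω := by
  refine hcg.2.2 ι (hι.mono hle le_rfl) ?_
  rintro y ⟨hym, φ, hφ, hyφ⟩
  set B := {ω | (y ω : EReal) < ι ω}
  have hB : MeasurableSet[𝓕 t] B := measurableSet_lt (measurable_coe_real_ereal.comp hym) hι
  have hιB : ∀ᵐ ω ∂μ, ω ∈ B → ((ι ω).toReal : EReal) = ι ω := by
    filter_upwards [hιg] with ω hω hωB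
    exact EReal.coe_toReal (ne_top_of_le_ne_top (EReal.coe_ne_top _) hω) (ne_bot_of_gt hωB)
  have hpos := h.ae_nonneg_on (z := fun ω => y ω - (ι ω).toReal) hB
      (hym.sub hι.ereal_toReal) hφ (by
    filter_upwards [hyφ, hιg, hιB] with ω h1 h2 h3 hωB
    rw [← h3 hωB, EReal.coe_le_coe_iff] at h2
    rw [EReal.coe_le_coe_iff] at h1
    linarith)
  filter_upwards [hpos, hιB] with ω h1 h2
  by_contra hlt
  have hωB : ω ∈ B := not_le.mp hlt
  have hyι : (y ω : EReal) < ι ω := hωB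
  rw [← h2 hωB, EReal.coe_lt_coe_iff] at hyι
  linarith [h1 hωB]

section Extension

variable [NeZero μ] {c g : Ω → ℝ} (hc : Measurable[𝓕 t] c)
  (hcg : IsEssInfSet μ (OneStepPrices 𝓕 μ S t fun ω => (g ω : EReal)) fun ω => (c ω : EReal))
  {x α : Ω → ℝ} (hx : Measurable[𝓕 t] x) (hα : Measurable[𝓕 t] α)
  {θ : Ω → Fin d → ℝ} (hθ : Measurable[𝓕 t] θ)
  (hxθα : ∀ᵐ ω ∂μ,
    0 ≤ x ω + (dotp (θ ω) fun i => S (t+1) ω i - S t ω i) + α ω * (g ω - c ω))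
include hc hcg hx hα hθ hxθα

lemma IsEssInfSet.ae_nonneg_of_neg : ∀ᵐ ω ∂μ, α ω < 0 → 0 ≤ x ω := by
  obtain ⟨y, hy, φ, hφ, hyφ⟩ := hcg.nonempty
  set B := {ω | α ω < 0}
  have hB : MeasurableSet[𝓕 t] B := measurableSet_lt hα measurable_const
  have hmem : B.piecewise (fun ω => c ω - x ω / α ω) y ∈
      OneStepPrices 𝓕 μ S t fun ω => (g ω : EReal) := by
    refine ⟨(hc.sub (hx.div hα)).piecewise hB hy,
      B.piecewise (fun ω => (-α ω)⁻¹ • θ ω) φ, (hα.neg.inv.smul hθ).piecewise hB hφ, ?_⟩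
    filter_upwards [hxθα, hyφ] with ω h1 h2
    by_cases hωB : ω ∈ B
    · have hα0 : α ω < 0 := hωB
      simp only [hωB, Set.piecewise_eq_of_mem, EReal.coe_le_coe_iff, dotp_eq_dotProduct,
        smul_dotProduct, smul_eq_mul, inv_neg, div_eq_mul_inv] at h1 ⊢
      have hscale := mul_nonpos_of_nonneg_of_nonpos h1 (inv_lt_zero.mpr hα0).le
      have hexpand : ((x ω + θ ω ⬝ᵥ fun i => S (t+1) ω i - S t ω i) + α ω * (g ω - c ω))
          * (α ω)⁻¹ = x ω * (α ω)⁻¹ + (α ω)⁻¹ * (θ ω ⬝ᵥ fun i => S (t+1) ω i - S t ω i)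
            + (g ω - c ω) := by
        field_simp [hα0.ne]
      linarith
    · simpa [hωB] using h2
  filter_upwards [hcg.2.1 _ hmem] with ω h1 hα0
  have hωB : ω ∈ B := hα0
  simp only [hωB, Set.piecewise_eq_of_mem, EReal.coe_le_coe_iff, le_sub_self_iff] at h1
  exact (div_nonpos_iff.mp h1).elim (fun h => h.1) (fun h => absurd hα0 (not_lt.mpr h.2))

lemma OneStepAIP.ae_nonneg_of_nonneg (hA : OneStepAIP 𝓕 μ S t) (hle : 𝓕 t ≤ mΩ) :
    ∀ᵐ ω ∂μ, 0 ≤ α ω → 0 ≤ x ω := by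
  have hprice : ∀ y ∈ OneStepPrices 𝓕 μ S t (fun ω => (g ω : EReal)),
      ∀ᵐ ω ∂μ, 0 ≤ α ω → 0 ≤ x ω + α ω * (y ω - c ω) := by
    rintro y ⟨hy, φ, hφ, hyφ⟩
    refine hA.ae_nonneg_on (z := fun ω => x ω + α ω * (y ω - c ω))
      (measurableSet_le measurable_const hα) (hx.add (hα.mul (hy.sub hc)))
      (hθ.add (hα.smul hφ)) ?_
    filter_upwards [hxθα, hyφ] with ω h1 h2 hα0
    rw [EReal.coe_le_coe_iff] at h2
    simp only [Pi.add_apply, Pi.smul_apply', dotp_eq_dotProduct, add_dotProduct,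
      smul_dotProduct, smul_eq_mul] at h1 h2 ⊢
    nlinarith [mul_le_mul_of_nonneg_left h2 hα0]
  set ζ : Ω → ℝ := fun ω => if 0 < α ω then c ω - x ω / α ω else c ω
  have hζ : Measurable[𝓕 t] ζ :=
    Measurable.ite (measurableSet_lt measurable_const hα) (hc.sub (hx.div hα)) hc
  have hζc := hcg.2.2 (fun ω => (ζ ω : EReal))
    (measurable_coe_real_ereal.comp (hζ.mono hle le_rfl)) fun y hy => by
      filter_upwards [hprice y hy, hcg.2.1 y hy] with ω h1 h2
      by_cases hα0 : 0 < α ω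
      · simp only [ζ, hα0, if_true, EReal.coe_le_coe_iff, sub_le_iff_le_add]
        have hdiv : c ω - y ω ≤ x ω / α ω := (le_div_iff₀ hα0).mpr (by linarith [h1 hα0.le])
        linarith
      · simpa [ζ, hα0] using h2
  obtain ⟨y, hy⟩ := hcg.nonempty
  filter_upwards [hζc, hprice y hy] with ω h1 h2 hα0
  rcases hα0.lt_or_eq with hpos | hzero
  · simp only [ζ, hpos, if_true, EReal.coe_le_coe_iff, sub_le_self_iff] at h1
    exact (div_nonneg_iff.mp h1).elim (fun h => h.1) (fun h => absurd hpos (not_lt.mpr h.2))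
  · simpa [← hzero] using h2 hα0

lemma OneStepAIP.ae_nonneg_ext (hA : OneStepAIP 𝓕 μ S t) (hle : 𝓕 t ≤ mΩ) :
    ∀ᵐ ω ∂μ, 0 ≤ x ω := by
  filter_upwards [hcg.ae_nonneg_of_neg hc hx hα hθ hxθα,
    hA.ae_nonneg_of_nonneg hc hcg hx hα hθ hxθα hle] with ω hneg hnonneg
  exact (lt_or_ge (α ω) 0).elim hneg hnonneg

end Extension

lemma pricesMulti_subset_pricesMultiExt (C : ℕ → Ω → ℝ) (g : Ω → ℝ) :
    PricesMulti 𝓕 μ S t T g ⊆ PricesMultiExt 𝓕 μ S C t T g := by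
  rintro x ⟨hx, θ, hθ, ε, hε, hε0, heq⟩
  exact ⟨hx, θ, hθ, 0, fun _ => measurable_const, ε, hε, hε0, by simpa using heq⟩

variable {C : ℕ → Ω → ℝ}

lemma ae_nonneg_of_mem_pricesMultiExt_self {x : Ω → ℝ}
    (hx : x ∈ PricesMultiExt 𝓕 μ S C T T fun _ => 0) : ∀ᵐ ω ∂μ, 0 ≤ x ω := by
  obtain ⟨_, _, _, _, _, ε, _, hε0, heq⟩ := hx
  filter_upwards [hε0, heq] with ω h1 h2
  simp only [Finset.Icc_eq_empty_of_lt T.lt_succ_self, Finset.sum_empty] at h2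
  linarith

lemma exists_mem_pricesMultiExt_succ (hmono : Monotone 𝓕) (hS : ∀ u, Measurable[𝓕 u] (S u))
    (hC : ∀ u, Measurable[𝓕 u] (C u)) (htT : t < T) {x : Ω → ℝ}
    (hx : x ∈ PricesMultiExt 𝓕 μ S C t T fun _ => 0) :
    ∃ θ : Ω → Fin d → ℝ, Measurable[𝓕 t] θ ∧ ∃ α : Ω → ℝ, Measurable[𝓕 t] α ∧
      (fun ω => x ω + (dotp (θ ω) fun i => S (t+1) ω i - S t ω i)
        + α ω * (C (t+1) ω - C t ω)) ∈ PricesMultiExt 𝓕 μ S C (t+1) T fun _ => 0 := by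
  obtain ⟨hxm, θ, hθ, α, hα, ε, hε, hε0, heq⟩ := hx
  have hle : 𝓕 t ≤ 𝓕 (t+1) := hmono t.le_succ
  refine ⟨θ t, hθ t, α t, hα t, ?_, θ, hθ, α, hα, ε, hε, hε0, ?_⟩
  · exact ((hxm.mono hle le_rfl).add (((hθ t).mono hle le_rfl).dotp
      (measurable_increment hmono hS t))).add (((hα t).mono hle le_rfl).mul
        ((hC (t+1)).sub ((hC t).mono hle le_rfl)))
  · filter_upwards [heq] with ω hω
    rw [← Finset.insert_Icc_add_one_left_eq_Icc (by omega : t + 1 ≤ T),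
      Finset.sum_insert (by simp), Nat.add_sub_cancel] at hω
    linarith

lemma ae_nonneg_of_mem_pricesMultiExt [NeZero μ] (hmono : Monotone 𝓕)
    (hle : ∀ u, 𝓕 u ≤ mΩ) (hS : ∀ u, Measurable[𝓕 u] (S u))
    (hC : ∀ u, Measurable[𝓕 u] (C u)) (hA : ∀ u, u < T → OneStepAIP 𝓕 μ S u)
    (hCrec : ∀ u, u < T → IsEssInfSet μ
      (OneStepPrices 𝓕 μ S u fun ω => ((C (u+1) ω : ℝ) : EReal)) fun ω => ((C u ω : ℝ) : EReal))
    (ht : t ≤ T) : ∀ x ∈ PricesMultiExt 𝓕 μ S C t T (fun _ => 0), ∀ᵐ ω ∂μ, 0 ≤ x ω := by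
  induction ht using Nat.decreasingInduction with
  | self => exact fun x hx => ae_nonneg_of_mem_pricesMultiExt_self hx
  | of_succ t htT ih =>
    intro x hx
    obtain ⟨θ, hθ, α, hα, hnext⟩ := exists_mem_pricesMultiExt_succ hmono hS hC htT hx
    exact (hA t htT).ae_nonneg_ext (hC t) (hCrec t htT) hx.1 hα hθ (ih _ hnext) (hle t)

end

theorem multiperiod_aip_extension_general
    {Ω : Type*} [mΩ : MeasurableSpace Ω] (μ : Measure Ω)
    [IsProbabilityMeasure μ]
    (T : ℕ) (𝓕 : ℕ → MeasurableSpace Ω) (hmono : Monotone 𝓕) (hle : ∀ t, 𝓕 t ≤ mΩ)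
    {d : ℕ} (S : ℕ → Ω → Fin d → ℝ) (hSadapt : ∀ t, Measurable[𝓕 t] (S t))
    (C : ℕ → Ω → ℝ) (hCadapt : ∀ t, Measurable[𝓕 t] (C t))
    (hCrec : ∀ t, t < T → IsEssInfSet μ
      (OneStepPrices 𝓕 μ S t fun ω => ((C (t+1) ω : ℝ) : EReal))
      fun ω => ((C t ω : ℝ) : EReal))
    (It St : ℕ → Ω → EReal)
    (hIt : ∀ t, t < T → IsCondEssInf (𝓕 t) μ (C (t+1)) (It t))
    (hSt : ∀ t, t < T → IsCondEssSup (𝓕 t) μ (C (t+1)) (St t)) :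
    ((∀ t, t ≤ T → ∀ x ∈ PricesMulti 𝓕 μ S t T fun _ => (0:ℝ),
        (∀ᵐ ω ∂μ, x ω ≤ 0) → x =ᵐ[μ] fun _ => (0:ℝ)) ↔
      (∀ t, t ≤ T → ∀ x ∈ PricesMultiExt 𝓕 μ S C t T fun _ => (0:ℝ),
        (∀ᵐ ω ∂μ, x ω ≤ 0) → x =ᵐ[μ] fun _ => (0:ℝ))) ∧
    ((∀ t, t ≤ T → ∀ x ∈ PricesMulti 𝓕 μ S t T fun _ => (0:ℝ),
        (∀ᵐ ω ∂μ, x ω ≤ 0) → x =ᵐ[μ] fun _ => (0:ℝ)) →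
      ∀ t, t < T → ∀ᵐ ω ∂μ,
        It t ω ≤ ((C t ω : ℝ) : EReal) ∧ ((C t ω : ℝ) : EReal) ≤ St t ω) := by
  have hstep (h : AIP μ (fun t => PricesMulti 𝓕 μ S t T fun _ => 0) T) :
      ∀ t, t < T → OneStepAIP 𝓕 μ S t := fun _ ht => h.oneStepAIP hmono hSadapt ht
  refine ⟨⟨fun h => ?_, AIP.mono fun t => pricesMulti_subset_pricesMultiExt C _⟩, fun h t ht => ?_⟩
  · exact AIP.of_ae_nonneg fun t ht =>
      ae_nonneg_of_mem_pricesMultiExt hmono hle hSadapt hCadapt (hstep h) hCrec ht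
  · filter_upwards [(hstep h t ht).ae_le_of_isEssInfSet (hle t) (hCrec t ht) (hIt t ht).1
      (hIt t ht).2.1, (hCrec t ht).ae_le_of_claim_ae_le (hSt t ht).1 (hSt t ht).2.1]
      with ω hlower hupper using ⟨hlower, hupper⟩

/-- the multi-period AIP condition holds for the market `S` if and only
if it holds for the market extended with the additional asset `C`, where
`C_t = π_{t,t+1}(C_{t+1})`; moreover under AIP,
`essinf_{F_t} C_{t+1} ≤ C_t ≤ esssup_{F_t} C_{t+1}` a.s. -/
theorem multiperiod_aip_extension
    {Ω : Type*} [mΩ : MeasurableSpace Ω] (μ : Measure Ω)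
    [IsProbabilityMeasure μ] [μ.IsComplete]
    (T : ℕ) (𝓕 : ℕ → MeasurableSpace Ω) (hmono : Monotone 𝓕) (hle : ∀ t, 𝓕 t ≤ mΩ)
    (hcomp : ∀ t, ∀ s : Set Ω, μ s = 0 → MeasurableSet[𝓕 t] s)
    {d : ℕ} (S : ℕ → Ω → Fin d → ℝ) (hSadapt : ∀ t, Measurable[𝓕 t] (S t))
    (hS0 : ∀ t ω i, 0 ≤ S t ω i)
    (C : ℕ → Ω → ℝ) (hCadapt : ∀ t, Measurable[𝓕 t] (C t))
    (hCrec : ∀ t, t < T → IsEssInfSet μ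
      (OneStepPrices 𝓕 μ S t fun ω => ((C (t+1) ω : ℝ) : EReal))
      fun ω => ((C t ω : ℝ) : EReal))
    (It St : ℕ → Ω → EReal)
    (hIt : ∀ t, t < T → IsCondEssInf (𝓕 t) μ (C (t+1)) (It t))
    (hSt : ∀ t, t < T → IsCondEssSup (𝓕 t) μ (C (t+1)) (St t)) :
    ((∀ t, t ≤ T → ∀ x ∈ PricesMulti 𝓕 μ S t T fun _ => (0:ℝ),
        (∀ᵐ ω ∂μ, x ω ≤ 0) → x =ᵐ[μ] fun _ => (0:ℝ)) ↔
      (∀ t, t ≤ T → ∀ x ∈ PricesMultiExt 𝓕 μ S C t T fun _ => (0:ℝ),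
        (∀ᵐ ω ∂μ, x ω ≤ 0) → x =ᵐ[μ] fun _ => (0:ℝ))) ∧
    ((∀ t, t ≤ T → ∀ x ∈ PricesMulti 𝓕 μ S t T fun _ => (0:ℝ),
        (∀ᵐ ω ∂μ, x ω ≤ 0) → x =ᵐ[μ] fun _ => (0:ℝ)) →
      ∀ t, t < T → ∀ᵐ ω ∂μ,
        It t ω ≤ ((C t ω : ℝ) : EReal) ∧ ((C t ω : ℝ) : EReal) ≤ St t ω) :=
  multiperiod_aip_extension_general (mΩ := mΩ) μ T 𝓕 hmono hle S hSadapt C hCadapt hCrec It St hIt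
    hSt
end
end
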